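/- arXiv:2512.19303 — 2 statements merged into one kernel-verified Lean document; each statement's English description precedes it below -/
import Mathlib

section
/- (Proposition 5.1, part 1.) Let n ≥ 1 and let g = [[A, b], [cᵀ, d]] be an invertible real (n+1)×(n+1) matrix in block form with c ≠ 0. Then there exist u, v ∈ ℝⁿ, an invertible n×n real matrix A₁, a vector b₁ ∈ ℝⁿ, and a real number d₁ > 0 such that g = [[Iₙ + uvᵀ, u], [vᵀ, 1]] · [[A₁, b₁], [0, d₁]]. -/
/-!
Since `[[I + uvᵀ, u], [vᵀ, 1]] = [[I, u], [0, 1]] · [[I, 0], [vᵀ, 1]]`, the factorization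
amounts to `A₁ = A - ucᵀ` with `vᵀA₁ = cᵀ`, `b₁ = b - du` and `d₁ = d - vᵀb₁`; this needs only
`A₁` invertible, and then `det g = det A₁ · d₁` because the left factor has determinant 1.
So it suffices to find `u` with `det (A - ucᵀ) = det g`, which forces `d₁ = 1`.
The map `u ↦ det (A - ucᵀ)` is affine, and not constant once it is nonzero somewhere because
`c ≠ 0`. It is nonzero somewhere since, if `A` is singular, any `u` outside the range of `A`
works: a kernel vector `y` of `A - ucᵀ` has `Ay = (cᵀy)u`, so `cᵀy = 0` and `(y, 0)` is a kernel
vector of `g`.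
-/

open Matrix

/-- The block matrix `[[A, b], [cᵀ, d]]` of size `(n+1) × (n+1)`. -/
def blockMat {n : ℕ} (A : Matrix (Fin n) (Fin n) ℝ) (b c : Fin n → ℝ) (d : ℝ) :
    Matrix (Fin n ⊕ Unit) (Fin n ⊕ Unit) ℝ :=
  Matrix.fromBlocks A (fun i _ => b i) (fun _ j => c j) (fun _ _ => d)

section RankOneUpdate

variable {m K : Type*} [Fintype m] [DecidableEq m] [Field K]

theorem exists_dotProduct_eq {c : m → K} (hc : c ≠ 0) (s : K) : ∃ x, c ⬝ᵥ x = s := by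
  obtain ⟨i, hi⟩ := Function.ne_iff.mp hc
  exact ⟨Pi.single i (s / c i), by rw [dotProduct_single, mul_div_cancel₀ _ hi]⟩

theorem det_one_sub_vecMulVec (x c : m → K) : (1 - vecMulVec x c).det = 1 - c ⬝ᵥ x := by
  rw [sub_eq_add_neg, ← neg_vecMulVec, vecMulVec_eq Unit,
    det_one_add_replicateCol_mul_replicateRow, dotProduct_neg, sub_eq_add_neg]

theorem det_sub_vecMulVec_mulVec (A : Matrix m m K) (x c : m → K) :
    (A - vecMulVec (A *ᵥ x) c).det = A.det * (1 - c ⬝ᵥ x) := by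
  rw [← mul_vecMulVec, ← det_one_sub_vecMulVec, ← det_mul, Matrix.mul_sub, Matrix.mul_one]

theorem exists_det_sub_vecMulVec_ne_zero {A : Matrix m m K} {c : m → K}
    (hker : ∀ y, A *ᵥ y = 0 → c ⬝ᵥ y = 0 → y = 0) :
    ∃ u, (A - vecMulVec u c).det ≠ 0 := by
  by_cases hA : IsUnit A
  · exact ⟨0, by simpa [← isUnit_iff_ne_zero, ← isUnit_iff_isUnit_det]⟩
  obtain ⟨u, hu⟩ : ∃ u, ∀ x, A *ᵥ x ≠ u := by
    simpa [Function.Surjective] using mt mulVec_surjective_iff_isUnit.mp hA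
  refine ⟨u, fun hdet => ?_⟩
  obtain ⟨y, hy0, hy⟩ := exists_mulVec_eq_zero_iff.mpr hdet
  have hAy : A *ᵥ y = (c ⬝ᵥ y) • u := by
    rwa [sub_mulVec, vecMulVec_mulVec, op_smul_eq_smul, sub_eq_zero] at hy
  by_cases hcy : c ⬝ᵥ y = 0
  · exact hy0 (hker y (by rw [hAy, hcy, zero_smul]) hcy)
  · refine hu ((c ⬝ᵥ y)⁻¹ • y) ?_
    rw [mulVec_smul, hAy, smul_smul, inv_mul_cancel₀ hcy, one_smul]

theorem exists_det_sub_vecMulVec_eq {A : Matrix m m K} {c u₀ : m → K} (hc : c ≠ 0)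
    (h₀ : (A - vecMulVec u₀ c).det ≠ 0) (t : K) :
    ∃ u, (A - vecMulVec u c).det = t := by
  set A₀ := A - vecMulVec u₀ c
  obtain ⟨x, hx⟩ := exists_dotProduct_eq hc (1 - t / A₀.det)
  refine ⟨u₀ + A₀ *ᵥ x, ?_⟩
  rw [add_vecMulVec, ← sub_sub, det_sub_vecMulVec_mulVec, hx, sub_sub_cancel,
    mul_div_cancel₀ _ h₀]

end RankOneUpdate

section BlockMat

variable {n : ℕ}

theorem blockMat_eq_fromBlocks (A : Matrix (Fin n) (Fin n) ℝ) (b c : Fin n → ℝ) (d : ℝ) :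
    blockMat A b c d =
      fromBlocks A (replicateCol Unit b) (replicateRow Unit c) (of fun _ _ => d) :=
  rfl

theorem blockMat_mul (A A' : Matrix (Fin n) (Fin n) ℝ) (b c b' c' : Fin n → ℝ) (d d' : ℝ) :
    blockMat A b c d * blockMat A' b' c' d' =
      blockMat (A * A' + vecMulVec b c') (A *ᵥ b' + d' • b) (c ᵥ* A' + d • c')
        (c ⬝ᵥ b' + d * d') := by
  simp only [blockMat_eq_fromBlocks, fromBlocks_multiply]
  ext (i | i) (j | j) <;>
    simp [mul_apply, vecMulVec_apply, mulVec, vecMul, dotProduct, mul_comm]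

theorem blockMat_mulVec_inl (A : Matrix (Fin n) (Fin n) ℝ) (b c : Fin n → ℝ) (d : ℝ)
    (y : Fin n → ℝ) :
    blockMat A b c d *ᵥ Sum.elim y 0 = Sum.elim (A *ᵥ y) (fun _ => c ⬝ᵥ y) := by
  ext (i | i) <;> simp [blockMat_eq_fromBlocks, mulVec, dotProduct]

theorem det_blockMat_zero (A : Matrix (Fin n) (Fin n) ℝ) (b : Fin n → ℝ) (d : ℝ) :
    (blockMat A b 0 d).det = A.det * d := by
  rw [blockMat_eq_fromBlocks, replicateRow_zero, det_fromBlocks_zero₂₁,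
    det_unique (of fun _ _ => d), of_apply]

theorem det_blockMat_one_add_vecMulVec (u v : Fin n → ℝ) :
    (blockMat (1 + vecMulVec u v) u v 1).det = 1 := by
  rw [blockMat_eq_fromBlocks, show (of fun _ _ => (1 : ℝ) : Matrix Unit Unit ℝ) = 1 by ext; simp,
    det_fromBlocks_one₂₂, ← vecMulVec_eq, add_sub_cancel_right, det_one]

theorem eq_zero_of_det_blockMat_ne_zero {A : Matrix (Fin n) (Fin n) ℝ} {b c : Fin n → ℝ} {d : ℝ}
    (hg : (blockMat A b c d).det ≠ 0) {y : Fin n → ℝ} (hAy : A *ᵥ y = 0) (hcy : c ⬝ᵥ y = 0) :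
    y = 0 := by
  by_contra hy
  refine hg (exists_mulVec_eq_zero_iff.mp ⟨Sum.elim y 0, fun h => hy ?_, ?_⟩)
  · exact funext fun i => congrFun h (Sum.inl i)
  · rw [blockMat_mulVec_inl, hAy, hcy]
    ext (i | i) <;> rfl

theorem blockMat_eq_mul_of_vecMul_eq {A : Matrix (Fin n) (Fin n) ℝ} {b c u v : Fin n → ℝ} {d : ℝ}
    (hv : v ᵥ* (A - vecMulVec u c) = c) :
    blockMat A b c d = blockMat (1 + vecMulVec u v) u v 1 *
      blockMat (A - vecMulVec u c) (b - d • u) 0 (d - v ⬝ᵥ (b - d • u)) := by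
  rw [blockMat_mul, add_mul, Matrix.one_mul, vecMulVec_mul, hv, add_mulVec, one_mulVec,
    vecMulVec_mulVec, op_smul_eq_smul, vecMulVec_zero, add_zero, sub_add_cancel, one_smul,
    add_zero, one_mul, add_sub_cancel]
  congr 1
  module

end BlockMat

theorem block_decomposition_general {n : ℕ}
    (A : Matrix (Fin n) (Fin n) ℝ) (b c : Fin n → ℝ) (d : ℝ)
    (hg : (blockMat A b c d).det ≠ 0) (hc : c ≠ 0) :
    ∃ (u v b₁ : Fin n → ℝ) (A₁ : Matrix (Fin n) (Fin n) ℝ) (d₁ : ℝ),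
      IsUnit A₁ ∧ 0 < d₁ ∧
      blockMat A b c d = blockMat (1 + vecMulVec u v) u v 1 * blockMat A₁ b₁ 0 d₁ := by
  obtain ⟨u₀, hu₀⟩ := exists_det_sub_vecMulVec_ne_zero fun _ => eq_zero_of_det_blockMat_ne_zero hg
  obtain ⟨u, hu⟩ := exists_det_sub_vecMulVec_eq hc hu₀ (blockMat A b c d).det
  set A₁ := A - vecMulVec u c
  have hA₁ : IsUnit A₁.det := hu ▸ hg.isUnit
  have hfac := blockMat_eq_mul_of_vecMul_eq (b := b) (d := d)
    (show c ᵥ* A₁⁻¹ ᵥ* A₁ = c by rw [vecMul_vecMul, nonsing_inv_mul _ hA₁, vecMul_one])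
  have hd₁ : d - c ᵥ* A₁⁻¹ ⬝ᵥ (b - d • u) = 1 := by
    have hdet := congrArg det hfac
    rw [det_mul, det_blockMat_one_add_vecMulVec, det_blockMat_zero, hu, one_mul] at hdet
    exact (mul_eq_left₀ hg).mp hdet.symm
  exact ⟨u, _, _, A₁, 1, (isUnit_iff_isUnit_det A₁).mpr hA₁, one_pos, hd₁ ▸ hfac⟩

/-- **Proposition 5.1, part 1.** Any invertible `g = [[A, b], [cᵀ, d]]` with `c ≠ 0` factors as
`g = [[Iₙ + uvᵀ, u], [vᵀ, 1]] · [[A₁, b₁], [0, d₁]]` with `A₁` invertible and `d₁ > 0`. -/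
theorem block_decomposition {n : ℕ} (hn : 1 ≤ n)
    (A : Matrix (Fin n) (Fin n) ℝ) (b c : Fin n → ℝ) (d : ℝ)
    (hg : (blockMat A b c d).det ≠ 0) (hc : c ≠ 0) :
    ∃ (u v b₁ : Fin n → ℝ) (A₁ : Matrix (Fin n) (Fin n) ℝ) (d₁ : ℝ),
      IsUnit A₁ ∧ 0 < d₁ ∧
      blockMat A b c d = blockMat (1 + vecMulVec u v) u v 1 * blockMat A₁ b₁ 0 d₁ :=
  block_decomposition_general A b c d hg hc
end

section
/- (Part of Theorem 5.4: the multinomial and negative multinomial classes are in the same G-orbit.) Let n ≥ 1, let 𝟙 ∈ ℝⁿ be the all-ones vector, and let g = [[Iₙ, 0], [𝟙ᵀ, 1]] ∈ GL(n+1, ℝ). Define V_II(m) = −mmᵀ + diag(m₁, …, mₙ) and V_III(m) = mmᵀ + diag(m₁, …, mₙ). Then for every m ∈ ℝⁿ with 𝟙ᵀm + 1 > 0: T_g(V_II)(m) = V_III(m). -/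
open Matrix

/-- The homography `h_g(x) = (Ax + b)/(cᵀx + d)` associated to the block matrix
`g = [[A, b], [cᵀ, d]]`. -/
noncomputable def homog {n : ℕ} (A : Matrix (Fin n) (Fin n) ℝ) (b c : Fin n → ℝ) (d : ℝ)
    (x : Fin n → ℝ) : Fin n → ℝ :=
  (c ⬝ᵥ x + d)⁻¹ • (A.mulVec x + b)

/-- The Jacobian matrix `h'_g(x) = (cᵀx + d)⁻² ((cᵀx + d)A − (Ax + b)cᵀ)`. -/
noncomputable def homogJac {n : ℕ} (A : Matrix (Fin n) (Fin n) ℝ) (b c : Fin n → ℝ) (d : ℝ)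
    (x : Fin n → ℝ) : Matrix (Fin n) (Fin n) ℝ :=
  ((c ⬝ᵥ x + d) ^ 2)⁻¹ • ((c ⬝ᵥ x + d) • A - vecMulVec (A.mulVec x + b) c)

/-- The transformation `T_g(V)(m) = (cᵀm + d)⁻¹ (h'_g(m))⁻¹ V(h_g(m)) ((h'_g(m))ᵀ)⁻¹`. -/
noncomputable def Tg {n : ℕ} (A : Matrix (Fin n) (Fin n) ℝ) (b c : Fin n → ℝ) (d : ℝ)
    (V : (Fin n → ℝ) → Matrix (Fin n) (Fin n) ℝ) (m : Fin n → ℝ) :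
    Matrix (Fin n) (Fin n) ℝ :=
  (c ⬝ᵥ m + d)⁻¹ •
    ((homogJac A b c d m)⁻¹ * V (homog A b c d m) * ((homogJac A b c d m)ᵀ)⁻¹)

/-!
For `g = [[1, 0], [cᵀ, 1]]` and `s = cᵀm + 1`, the homography is `h_g(m) = m / s` and, by
Sherman–Morrison, `h'_g(m)⁻¹ = s (1 + m cᵀ)`, so `T_g(V)(m) = s (1 + m cᵀ) V(m / s) (1 + c mᵀ)`.
For `c = 𝟙` the conjugation by `1 + m 𝟙ᵀ` sends `m mᵀ` to `s² m mᵀ` and `diag m` to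
`diag m + (s + 1) m mᵀ`, hence `T_g(V_II)(m) = -s m mᵀ + diag m + (s + 1) m mᵀ = V_III(m)`.
-/

section RankOne

variable {R ι : Type*} [CommRing R] [Fintype ι] [DecidableEq ι]

lemma one_add_vecMulVec_mulVec (u v w : ι → R) :
    (1 + vecMulVec u v) *ᵥ w = w + (v ⬝ᵥ w) • u := by
  rw [add_mulVec, one_mulVec, vecMulVec_mulVec, op_smul_eq_smul]

lemma vecMul_one_add_vecMulVec (u v w : ι → R) :
    w ᵥ* (1 + vecMulVec u v) = w + (w ⬝ᵥ u) • v := by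
  rw [vecMul_add, vecMul_one, vecMul_vecMulVec]

lemma sub_vecMulVec_mul_one_add_vecMulVec (u v : ι → R) :
    ((v ⬝ᵥ u + 1) • 1 - vecMulVec u v) * (1 + vecMulVec u v) = (v ⬝ᵥ u + 1) • 1 := by
  rw [sub_mul, mul_add, mul_one, smul_mul, one_mul, mul_add, mul_one,
    vecMulVec_mul_vecMulVec, vecMulVec_smul]
  module

lemma one_add_vecMulVec_one_conj_vecMulVec_self (m : ι → R) :
    (1 + vecMulVec m 1) * vecMulVec m m * (1 + vecMulVec 1 m)
      = (1 ⬝ᵥ m + 1) ^ 2 • vecMulVec m m := by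
  have hscale : m + (1 ⬝ᵥ m) • m = (1 ⬝ᵥ m + 1) • m := by module
  rw [mul_vecMulVec, vecMulVec_mul, one_add_vecMulVec_mulVec, vecMul_one_add_vecMulVec,
    dotProduct_comm m 1, hscale, smul_vecMulVec, vecMulVec_smul, smul_smul, sq]

lemma one_vecMul_diagonal (m : ι → R) : 1 ᵥ* diagonal m = m := by
  ext i
  rw [vecMul_diagonal, Pi.one_apply, one_mul]

lemma diagonal_mulVec_one (m : ι → R) : diagonal m *ᵥ 1 = m := by
  ext i
  rw [mulVec_diagonal, Pi.one_apply, mul_one]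

lemma one_add_vecMulVec_one_conj_diagonal (m : ι → R) :
    (1 + vecMulVec m 1) * diagonal m * (1 + vecMulVec 1 m)
      = diagonal m + (1 ⬝ᵥ m + 1 + 1) • vecMulVec m m := by
  rw [add_mul, one_mul, vecMulVec_mul, one_vecMul_diagonal, add_mul, mul_add, mul_one,
    mul_vecMulVec, diagonal_mulVec_one, vecMulVec_mul, vecMul_one_add_vecMulVec,
    vecMulVec_add, vecMulVec_smul, dotProduct_comm m 1]
  module

end RankOne

section UnipotentHomography

variable {n : ℕ} (c m : Fin n → ℝ)

lemma homog_one_zero : homog 1 0 c 1 m = (c ⬝ᵥ m + 1)⁻¹ • m := by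
  rw [homog, one_mulVec, add_zero]

lemma homogJac_one_zero :
    homogJac 1 0 c 1 m = ((c ⬝ᵥ m + 1) ^ 2)⁻¹ • ((c ⬝ᵥ m + 1) • 1 - vecMulVec m c) := by
  rw [homogJac, one_mulVec, add_zero]

variable {c m}

lemma inv_homogJac_one_zero (h : c ⬝ᵥ m + 1 ≠ 0) :
    (homogJac 1 0 c 1 m)⁻¹ = (c ⬝ᵥ m + 1) • (1 + vecMulVec m c) := by
  refine inv_eq_right_inv ?_
  rw [homogJac_one_zero, Matrix.smul_mul, Matrix.mul_smul, sub_vecMulVec_mul_one_add_vecMulVec,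
    smul_smul, smul_smul]
  field_simp
  simp

lemma Tg_one_zero (h : c ⬝ᵥ m + 1 ≠ 0) (V : (Fin n → ℝ) → Matrix (Fin n) (Fin n) ℝ) :
    Tg 1 0 c 1 V m = (c ⬝ᵥ m + 1) •
      ((1 + vecMulVec m c) * V ((c ⬝ᵥ m + 1)⁻¹ • m) * (1 + vecMulVec c m)) := by
  rw [Tg, ← transpose_nonsing_inv, inv_homogJac_one_zero h, homog_one_zero, transpose_smul,
    transpose_add, transpose_one, transpose_vecMulVec, Matrix.smul_mul, Matrix.mul_smul,
    Matrix.smul_mul, smul_smul, smul_smul]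
  congr 1
  field_simp

end UnipotentHomography

theorem multinomial_negative_multinomial_same_orbit_general {n : ℕ}
    (m : Fin n → ℝ) (hm : 0 < (fun _ => (1 : ℝ)) ⬝ᵥ m + 1) :
    Tg 1 0 (fun _ => (1 : ℝ)) 1 (fun x => -vecMulVec x x + Matrix.diagonal x) m
      = vecMulVec m m + Matrix.diagonal m := by
  change 0 < (1 : Fin n → ℝ) ⬝ᵥ m + 1 at hm
  change Tg 1 0 1 1 _ m = _
  set s := (1 : Fin n → ℝ) ⬝ᵥ m + 1 with hs
  have hV : -vecMulVec (s⁻¹ • m) (s⁻¹ • m) + diagonal (s⁻¹ • m)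
      = -(s⁻¹ ^ 2) • vecMulVec m m + s⁻¹ • diagonal m := by
    rw [smul_vecMulVec, vecMulVec_smul, diagonal_smul, smul_smul, sq, neg_smul]
  rw [Tg_one_zero hm.ne', hV, Matrix.mul_add (1 + vecMulVec m 1),
    Matrix.add_mul _ _ (1 + vecMulVec 1 m), Matrix.mul_smul, Matrix.smul_mul, Matrix.mul_smul,
    Matrix.smul_mul, one_add_vecMulVec_one_conj_vecMulVec_self,
    one_add_vecMulVec_one_conj_diagonal, ← hs]
  match_scalars
  · field_simp
    ring
  · field_simp

/-- **Part of Theorem 5.4.** For `g = [[Iₙ, 0], [𝟙ᵀ, 1]]`, the multinomial variance function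
`V_II(m) = −mmᵀ + diag(m)` is sent by `T_g` to the negative multinomial one
`V_III(m) = mmᵀ + diag(m)`. -/
theorem multinomial_negative_multinomial_same_orbit {n : ℕ} (hn : 1 ≤ n)
    (m : Fin n → ℝ) (hm : 0 < (fun _ => (1 : ℝ)) ⬝ᵥ m + 1) :
    Tg 1 0 (fun _ => (1 : ℝ)) 1 (fun x => -vecMulVec x x + Matrix.diagonal x) m
      = vecMulVec m m + Matrix.diagonal m :=
  multinomial_negative_multinomial_same_orbit_general m hm
end
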